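/- Let m > 0 and let φ̃, ψ̃ : ℝ³ → ℂ be Schwartz functions. Define the Newton–Wigner wave function ψ_NW(t,x) := (2π)^{−3/2} ∫_{ℝ³} (2ε_p)^{−1/2} e^{i(x·p − t ε_p)} ψ̃(p) dp, and similarly φ_NW. Then for every t ∈ ℝ: ∫_{ℝ³} conj(φ_NW(t,x)) · ψ_NW(t,x) dx = ∫_{ℝ³} (2ε_p)^{−1} · conj(φ̃(p)) · ψ̃(p) dp = KG_t(φ^{+1}, ψ^{+1}); i.e., the Klein–Gordon inner product of positive-frequency solutions assumes the standard Schrödinger form when expressed in terms of the Newton–Wigner wave functions. -/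

import Mathlib

open MeasureTheory

noncomputable section

/-- Relativistic energy `ε_p = √(‖p‖² + m²)`. -/
def relEnergy (m : ℝ) (p : EuclideanSpace ℝ (Fin 3)) : ℝ :=
  Real.sqrt (‖p‖ ^ 2 + m ^ 2)

/-- The `σ`-frequency solution of the Klein–Gordon equation with momentum-space profile
`ψ̃`:  `ψ^σ(t,x) = (2π)^{−3/2} ∫ (2ε_p)⁻¹ e^{i(x·p − σ t ε_p)} ψ̃(p) dp`. -/
def kgSolution (m σ : ℝ) (ψ : SchwartzMap (EuclideanSpace ℝ (Fin 3)) ℂ)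
    (t : ℝ) (x : EuclideanSpace ℝ (Fin 3)) : ℂ :=
  (((2 * Real.pi) ^ (-(3 : ℝ) / 2) : ℝ) : ℂ) *
    ∫ p : EuclideanSpace ℝ (Fin 3),
      ((2 * relEnergy m p : ℝ) : ℂ)⁻¹ *
        Complex.exp (Complex.I *
          (((inner ℝ x p : ℝ) : ℂ) - (σ : ℂ) * (t : ℂ) * ((relEnergy m p : ℝ) : ℂ))) *
        ψ p

/-- The Klein–Gordon pairing at time `t`:
`KG_t(φ,ψ) = i ∫ [conj(φ(t,x))·∂_tψ(t,x) − conj(∂_tφ(t,x))·ψ(t,x)] dx`. -/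
def kgPairing (φ ψ : ℝ → EuclideanSpace ℝ (Fin 3) → ℂ) (t : ℝ) : ℂ :=
  Complex.I * ∫ x : EuclideanSpace ℝ (Fin 3),
    (starRingEnd ℂ (φ t x) * deriv (fun t' => ψ t' x) t -
      starRingEnd ℂ (deriv (fun t' => φ t' x) t) * ψ t x)

/-- The Newton–Wigner wave function
`ψ_NW(t,x) = (2π)^{−3/2} ∫ (2ε_p)^{−1/2} e^{i(x·p − t ε_p)} ψ̃(p) dp`. -/
def newtonWigner (m : ℝ) (ψ : SchwartzMap (EuclideanSpace ℝ (Fin 3)) ℂ)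
    (t : ℝ) (x : EuclideanSpace ℝ (Fin 3)) : ℂ :=
  (((2 * Real.pi) ^ (-(3 : ℝ) / 2) : ℝ) : ℂ) *
    ∫ p : EuclideanSpace ℝ (Fin 3),
      ((Real.sqrt (2 * relEnergy m p) : ℝ) : ℂ)⁻¹ *
        Complex.exp (Complex.I *
          (((inner ℝ x p : ℝ) : ℂ) - (t : ℂ) * ((relEnergy m p : ℝ) : ℂ))) *
        ψ p

/-!
Each of `ψ_NW`, `ψ⁺` and `∂ₜψ⁺` is, at time `t`, `(2π)^{-3/2}` times the inverse Fourier transform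
`∫ e^{i⟪x,p⟫} f(p) dp` of a profile `f(p) = e^{-itε_p} w(p) ψ̃(p)`, with the weights
`w = (2ε_p)^{-1/2}`, `(2ε_p)^{-1}` and `-i/2` respectively (the last by differentiating under the
integral sign). Since `m ≠ 0`, `ε_p = |m| (1 + ‖p/m‖²)^{1/2}` is a rescaled Bessel potential, so
the weights and the phase have temperate growth and the profiles are Schwartz functions. Plancherel
then turns `∫ conj(F₁) F₂ dx` into `∫ conj(w₁) w₂ conj(φ̃) ψ̃ dp`, the phases cancelling, and it
remains to note `((2ε)^{-1/2})² = (2ε)^{-1}` and `i ((2ε)^{-1} (-i/2) - (i/2) (2ε)^{-1}) = (2ε)^{-1}`.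
-/

open Complex FourierTransform SchwartzMap
open Function (HasTemperateGrowth)
open scoped ComplexConjugate

section Plancherel

variable {V : Type*} [NormedAddCommGroup V] [InnerProductSpace ℝ V] [FiniteDimensional ℝ V]
  [MeasurableSpace V] [BorelSpace V]

def physFourierInv (f : V → ℂ) (x : V) : ℂ :=
  ∫ p, cexp (I * (inner ℝ x p : ℝ)) * f p

theorem physFourierInv_eq_fourierInv (f : V → ℂ) (x : V) :
    physFourierInv f x = 𝓕⁻ f ((2 * Real.pi)⁻¹ • x) := by
  rw [physFourierInv, Real.fourierInv_eq']
  congr 1 with p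
  rw [smul_eq_mul, inner_smul_right, real_inner_comm, ← mul_assoc,
    mul_inv_cancel₀ Real.two_pi_pos.ne', one_mul, mul_comm I]

theorem SchwartzMap.integrable_conj_mul (a b : 𝓢(V, ℂ)) :
    Integrable (fun y => conj (a y) * b y) :=
  b.integrable.bdd_mul (c := SchwartzMap.seminorm ℝ 0 0 a)
    (continuous_conj.comp a.continuous).aestronglyMeasurable
    (.of_forall fun y => (RCLike.norm_conj _).trans_le (a.norm_le_seminorm ℝ y))

theorem integrable_conj_physFourierInv_mul (a b : 𝓢(V, ℂ)) :
    Integrable (fun x => conj (physFourierInv a x) * physFourierInv b x) := by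
  have h := (𝓕⁻ a).integrable_conj_mul (𝓕⁻ b)
  simp only [fourierInv_coe] at h
  simp only [physFourierInv_eq_fourierInv]
  exact h.comp_smul (inv_ne_zero Real.two_pi_pos.ne')

theorem integral_conj_physFourierInv_mul (a b : 𝓢(V, ℂ)) :
    ∫ x, conj (physFourierInv a x) * physFourierInv b x
      = (2 * Real.pi) ^ Module.finrank ℝ V * ∫ p, conj (a p) * b p := by
  have h := integral_sesq_fourier_eq (𝓕⁻ a) b (innerSL ℂ)
  simp only [fourier_fourierInv_eq, innerSL_apply_apply, fourierInv_coe, RCLike.inner_apply'] at h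
  simp only [physFourierInv_eq_fourierInv]
  rw [Measure.integral_comp_inv_smul_of_nonneg volume (fun y => conj (𝓕⁻ (⇑a) y) * 𝓕⁻ (⇑b) y)
    Real.two_pi_pos.le, ← h, real_smul, ofReal_pow, ofReal_mul, ofReal_ofNat]

theorem integrable_cexp_inner_mul {μ : Measure V} (x : V) {f : V → ℂ} (hf : Integrable f μ) :
    Integrable (fun p => cexp (I * (inner ℝ x p : ℝ)) * f p) μ :=
  hf.bdd_mul (by fun_prop) (.of_forall fun p => by rw [mul_comm, norm_exp_ofReal_mul_I])

end Plancherel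

theorem hasDerivAt_integral_cexp_mul {α : Type*} [MeasurableSpace α] {μ : Measure α}
    {ω : α → ℝ} {h : α → ℂ} (hω : AEStronglyMeasurable ω μ) (hh : Integrable h μ)
    (hωh : Integrable (fun p => (ω p : ℂ) * h p) μ) (t : ℝ) :
    HasDerivAt (fun s : ℝ => ∫ p, cexp (↑(s * ω p) * I) * h p ∂μ)
      (∫ p, ω p * I * cexp (↑(t * ω p) * I) * h p ∂μ) t := by
  have hphase (s : ℝ) : AEStronglyMeasurable (fun p => cexp (↑(s * ω p) * I)) μ :=
    continuous_exp.comp_aestronglyMeasurable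
      ((continuous_ofReal.comp_aestronglyMeasurable (hω.const_mul s)).mul_const I)
  have hF' : AEStronglyMeasurable (fun p => ω p * I * cexp (↑(t * ω p) * I) * h p) μ :=
    (((continuous_ofReal.comp_aestronglyMeasurable hω).mul_const I).mul (hphase t)).mul hh.1
  refine (hasDerivAt_integral_of_dominated_loc_of_deriv_le (bound := fun p => ‖(ω p : ℂ) * h p‖)
    (F' := fun s p => ω p * I * cexp (↑(s * ω p) * I) * h p)
    Filter.univ_mem (.of_forall fun s => (hphase s).mul hh.1)
    (hh.bdd_mul (hphase t) (.of_forall fun p => (norm_exp_ofReal_mul_I _).le)) hF'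
    (.of_forall fun p s _ => ?_) hωh.norm (.of_forall fun p s _ => ?_)).2
  · simp only [norm_mul, norm_I, norm_exp_ofReal_mul_I, mul_one, le_refl]
  · have hd : HasDerivAt (fun s : ℝ => (↑(s * ω p) : ℂ) * I) (ω p * I) s := by
      simpa using ((hasDerivAt_id s).mul_const (ω p)).ofReal_comp.mul_const I
    have hF := hd.cexp.mul_const (h p)
    rwa [mul_comm (cexp _)] at hF

theorem iteratedDeriv_cexp_ofReal_mul_I (n : ℕ) :
    iteratedDeriv n (fun s : ℝ => cexp (s * I)) = fun s : ℝ => I ^ n * cexp (s * I) := by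
  induction n with
  | zero => simp
  | succ n ih =>
    ext s
    have hd := ((hasDerivAt_id s).ofReal_comp.mul_const I).cexp.const_mul (I ^ n)
    simp only [id, ofReal_one, one_mul] at hd
    rw [iteratedDeriv_succ, ih, hd.deriv, pow_succ]
    ring

theorem hasTemperateGrowth_cexp_ofReal_mul_I : (fun s : ℝ => cexp (s * I)).HasTemperateGrowth := by
  refine ⟨(ofRealCLM.contDiff.mul contDiff_const).cexp, fun n => ⟨0, 1, fun s => ?_⟩⟩
  rw [norm_iteratedFDeriv_eq_norm_iteratedDeriv, iteratedDeriv_cexp_ofReal_mul_I]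
  simp [norm_exp_ofReal_mul_I]

local notation "E3" => EuclideanSpace ℝ (Fin 3)

theorem continuous_relEnergy (m : ℝ) : Continuous (relEnergy m) := by
  unfold relEnergy
  fun_prop

section RelativisticEnergy

variable {m : ℝ}

theorem relEnergy_pos (hm : m ≠ 0) (p : E3) : 0 < relEnergy m p :=
  Real.sqrt_pos.2 (by positivity)

theorem relEnergy_rpow_eq (hm : m ≠ 0) (r : ℝ) (p : E3) :
    relEnergy m p ^ r = (m ^ 2) ^ (r / 2) * (1 + ‖m⁻¹ • p‖ ^ 2) ^ (r / 2) := by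
  have hsplit : ‖p‖ ^ 2 + m ^ 2 = m ^ 2 * (1 + ‖m⁻¹ • p‖ ^ 2) := by
    rw [norm_smul, mul_pow, norm_inv, Real.norm_eq_abs, inv_pow, sq_abs]
    field_simp
    ring
  rw [relEnergy, Real.sqrt_eq_rpow, ← Real.rpow_mul (by positivity), hsplit,
    Real.mul_rpow (by positivity) (by positivity)]
  ring_nf

theorem hasTemperateGrowth_relEnergy_rpow (hm : m ≠ 0) (r : ℝ) :
    (fun p : E3 => relEnergy m p ^ r).HasTemperateGrowth := by
  simp_rw [relEnergy_rpow_eq hm]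
  exact (HasTemperateGrowth.const _).mul
    ((Function.hasTemperateGrowth_one_add_norm_sq_rpow E3 (r / 2)).comp
      (m⁻¹ • ContinuousLinearMap.id ℝ E3).hasTemperateGrowth)

theorem hasTemperateGrowth_inv_sqrt_two_mul_relEnergy (hm : m ≠ 0) :
    (fun p : E3 => ((√(2 * relEnergy m p) : ℝ) : ℂ)⁻¹).HasTemperateGrowth := by
  have h : (fun p : E3 => ((√(2 * relEnergy m p) : ℝ) : ℂ)⁻¹)
      = fun p => ((2 ^ (-(1 : ℝ) / 2) * relEnergy m p ^ (-(1 : ℝ) / 2) : ℝ) : ℂ) := by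
    ext p
    rw [Real.sqrt_eq_rpow, ← ofReal_inv, ← Real.rpow_neg (mul_pos two_pos (relEnergy_pos hm p)).le,
      Real.mul_rpow (by positivity) (relEnergy_pos hm p).le]
    ring_nf
  rw [h]
  exact Function.Complex.hasTemperateGrowth_ofReal.comp
    ((HasTemperateGrowth.const _).fun_mul (hasTemperateGrowth_relEnergy_rpow hm _))

theorem hasTemperateGrowth_inv_two_mul_relEnergy (hm : m ≠ 0) :
    (fun p : E3 => ((2 * relEnergy m p : ℝ) : ℂ)⁻¹).HasTemperateGrowth := by
  have h : (fun p : E3 => ((2 * relEnergy m p : ℝ) : ℂ)⁻¹)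
      = fun p => ((2⁻¹ * relEnergy m p ^ (-1 : ℝ) : ℝ) : ℂ) := by
    ext p
    rw [Real.rpow_neg_one, ← mul_inv, ofReal_inv]
  rw [h]
  exact Function.Complex.hasTemperateGrowth_ofReal.comp
    ((HasTemperateGrowth.const _).fun_mul (hasTemperateGrowth_relEnergy_rpow hm _))

theorem hasTemperateGrowth_cexp_relEnergy (hm : m ≠ 0) (t : ℝ) :
    (fun p : E3 => cexp (↑(t * -relEnergy m p) * I)).HasTemperateGrowth := by
  have hε : (fun p : E3 => relEnergy m p).HasTemperateGrowth := by
    simpa using hasTemperateGrowth_relEnergy_rpow hm 1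
  exact hasTemperateGrowth_cexp_ofReal_mul_I.comp ((HasTemperateGrowth.const t).fun_mul hε.fun_neg)

end RelativisticEnergy

section Evolution

variable {m : ℝ}

/-- `p ↦ e^{-itε_p} w(p) ψ̃(p)`; `smulLeftCLM` returns `0` unless `w` has temperate growth. -/
def evolvedProfile (m t : ℝ) (w : E3 → ℂ) (ψ : 𝓢(E3, ℂ)) : 𝓢(E3, ℂ) :=
  smulLeftCLM ℂ (fun p => cexp (↑(t * -relEnergy m p) * I) * w p) ψ

theorem evolvedProfile_apply (hm : m ≠ 0) (t : ℝ) {w : E3 → ℂ} (hw : w.HasTemperateGrowth)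
    (ψ : 𝓢(E3, ℂ)) (p : E3) :
    evolvedProfile m t w ψ p = cexp (↑(t * -relEnergy m p) * I) * w p * ψ p := by
  rw [evolvedProfile, smulLeftCLM_apply_apply ((hasTemperateGrowth_cexp_relEnergy hm t).fun_mul hw),
    smul_eq_mul]

theorem conj_evolvedProfile_mul (hm : m ≠ 0) (t : ℝ) {w₁ w₂ : E3 → ℂ}
    (hw₁ : w₁.HasTemperateGrowth) (hw₂ : w₂.HasTemperateGrowth) (φ ψ : 𝓢(E3, ℂ)) (p : E3) :
    conj (evolvedProfile m t w₁ φ p) * evolvedProfile m t w₂ ψ p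
      = conj (w₁ p) * w₂ p * (conj (φ p) * ψ p) := by
  have hphase :
      conj (cexp (↑(t * -relEnergy m p) * I)) * cexp (↑(t * -relEnergy m p) * I) = 1 := by
    rw [conj_mul', norm_exp_ofReal_mul_I, ofReal_one, one_pow]
  rw [evolvedProfile_apply hm t hw₁, evolvedProfile_apply hm t hw₂]
  simp only [map_mul]
  linear_combination conj (w₁ p) * w₂ p * (conj (φ p) * ψ p) * hphase

theorem integral_conj_mul_evolvedProfile (hm : m ≠ 0) (t : ℝ) {w₁ w₂ : E3 → ℂ}
    (hw₁ : w₁.HasTemperateGrowth) (hw₂ : w₂.HasTemperateGrowth) (φ ψ : 𝓢(E3, ℂ)) :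
    ∫ x, conj ((((2 * Real.pi) ^ (-(3 : ℝ) / 2) : ℝ) : ℂ) *
          physFourierInv (evolvedProfile m t w₁ φ) x) *
        ((((2 * Real.pi) ^ (-(3 : ℝ) / 2) : ℝ) : ℂ) * physFourierInv (evolvedProfile m t w₂ ψ) x)
      = ∫ p, conj (w₁ p) * w₂ p * (conj (φ p) * ψ p) := by
  set c : ℝ := (2 * Real.pi) ^ (-(3 : ℝ) / 2)
  have hc : c * c * (2 * Real.pi) ^ 3 = 1 := by
    rw [← Real.rpow_add Real.two_pi_pos, ← Real.rpow_natCast, ← Real.rpow_add Real.two_pi_pos]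
    norm_num
  calc _ = ((c * c : ℝ) : ℂ) * ∫ x, conj (physFourierInv (evolvedProfile m t w₁ φ) x) *
          physFourierInv (evolvedProfile m t w₂ ψ) x := by
        rw [← integral_const_mul]
        congr 1 with x
        simp only [map_mul, conj_ofReal, ofReal_mul]
        ring
    _ = ((c * c * (2 * Real.pi) ^ 3 : ℝ) : ℂ) *
          ∫ p, conj (evolvedProfile m t w₁ φ p) * evolvedProfile m t w₂ ψ p := by
        rw [integral_conj_physFourierInv_mul, finrank_euclideanSpace_fin]
        push_cast
        ring
    _ = _ := by
        simp only [hc, ofReal_one, one_mul, conj_evolvedProfile_mul hm t hw₁ hw₂]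

end Evolution

section KleinGordon

variable {m : ℝ}

theorem cexp_I_mul_inner_sub (x p : E3) (t e : ℝ) :
    cexp (I * (↑(inner ℝ x p) - ↑t * ↑e)) = cexp (I * ↑(inner ℝ x p)) * cexp (↑(t * -e) * I) := by
  rw [← exp_add]
  push_cast
  ring_nf

theorem newtonWigner_eq (hm : m ≠ 0) (ψ : 𝓢(E3, ℂ)) (t : ℝ) (x : E3) :
    newtonWigner m ψ t x = (((2 * Real.pi) ^ (-(3 : ℝ) / 2) : ℝ) : ℂ) *
      physFourierInv (evolvedProfile m t (fun p => ((√(2 * relEnergy m p) : ℝ) : ℂ)⁻¹) ψ) x := by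
  rw [newtonWigner, physFourierInv]
  congr 2 with p
  rw [evolvedProfile_apply hm t (hasTemperateGrowth_inv_sqrt_two_mul_relEnergy hm),
    cexp_I_mul_inner_sub]
  ring

theorem kgSolution_one_eq (hm : m ≠ 0) (ψ : 𝓢(E3, ℂ)) (t : ℝ) (x : E3) :
    kgSolution m 1 ψ t x = (((2 * Real.pi) ^ (-(3 : ℝ) / 2) : ℝ) : ℂ) *
      physFourierInv (evolvedProfile m t (fun p => ((2 * relEnergy m p : ℝ) : ℂ)⁻¹) ψ) x := by
  rw [kgSolution, physFourierInv]
  congr 2 with p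
  rw [evolvedProfile_apply hm t (hasTemperateGrowth_inv_two_mul_relEnergy hm), ofReal_one,
    one_mul, cexp_I_mul_inner_sub]
  ring

theorem hasDerivAt_kgSolution_one (hm : m ≠ 0) (ψ : 𝓢(E3, ℂ)) (t : ℝ) (x : E3) :
    HasDerivAt (fun s => kgSolution m 1 ψ s x)
      ((((2 * Real.pi) ^ (-(3 : ℝ) / 2) : ℝ) : ℂ) *
        physFourierInv (evolvedProfile m t (fun _ => -I / 2) ψ) x) t := by
  have hw := hasTemperateGrowth_inv_two_mul_relEnergy hm
  set h : E3 → ℂ := fun p => cexp (I * ↑(inner ℝ x p)) * (((2 * relEnergy m p : ℝ) : ℂ)⁻¹ * ψ p)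
  have hε (p : E3) : ((relEnergy m p : ℝ) : ℂ) ≠ 0 := ofReal_ne_zero.2 (relEnergy_pos hm p).ne'
  have hh : Integrable h := integrable_cexp_inner_mul x <| by
    simpa only [smulLeftCLM_apply hw, smul_eq_mul] using
      (smulLeftCLM ℂ (fun p : E3 => ((2 * relEnergy m p : ℝ) : ℂ)⁻¹) ψ).integrable
  have hωh : Integrable (fun p => ((-relEnergy m p : ℝ) : ℂ) * h p) := by
    refine (integrable_cexp_inner_mul x (ψ.integrable.const_mul (-(1 / 2) : ℂ))).congr
      (.of_forall fun p => ?_)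
    simp only [h]
    field_simp [hε p]
    push_cast
    ring
  have hsol : (fun s => kgSolution m 1 ψ s x)
      = fun s => (((2 * Real.pi) ^ (-(3 : ℝ) / 2) : ℝ) : ℂ) *
          ∫ p, cexp (↑(s * -relEnergy m p) * I) * h p := by
    ext s
    rw [kgSolution]
    congr 2 with p
    rw [ofReal_one, one_mul, cexp_I_mul_inner_sub]
    ring
  have hval : ∫ p, ↑(-relEnergy m p) * I * cexp (↑(t * -relEnergy m p) * I) * h p
      = physFourierInv (evolvedProfile m t (fun _ => -I / 2) ψ) x := by
    rw [physFourierInv]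
    congr 1 with p
    rw [evolvedProfile_apply hm t (.const _)]
    simp only [h]
    field_simp [hε p]
    push_cast
    ring
  rw [hsol, ← hval]
  exact (hasDerivAt_integral_cexp_mul (continuous_relEnergy m).neg.aestronglyMeasurable hh hωh
    t).const_mul _

theorem integral_conj_newtonWigner_mul (hm : m ≠ 0) (φ ψ : 𝓢(E3, ℂ)) (t : ℝ) :
    ∫ x, conj (newtonWigner m φ t x) * newtonWigner m ψ t x
      = ∫ p, ((2 * relEnergy m p : ℝ) : ℂ)⁻¹ * conj (φ p) * ψ p := by
  have hw := hasTemperateGrowth_inv_sqrt_two_mul_relEnergy hm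
  simp only [newtonWigner_eq hm, integral_conj_mul_evolvedProfile hm t hw hw]
  congr 1 with p
  have h2ε : 0 ≤ 2 * relEnergy m p := (mul_pos two_pos (relEnergy_pos hm p)).le
  rw [map_inv₀, conj_ofReal, ← mul_inv, ← ofReal_mul, Real.mul_self_sqrt h2ε]
  ring

theorem kgPairing_kgSolution_one (hm : m ≠ 0) (φ ψ : 𝓢(E3, ℂ)) (t : ℝ) :
    kgPairing (kgSolution m 1 φ) (kgSolution m 1 ψ) t
      = ∫ p, ((2 * relEnergy m p : ℝ) : ℂ)⁻¹ * conj (φ p) * ψ p := by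
  have hw := hasTemperateGrowth_inv_two_mul_relEnergy hm
  have hhalf := HasTemperateGrowth.const (E := E3) (-I / 2)
  have hint (a b : 𝓢(E3, ℂ)) : Integrable fun x =>
      conj ((((2 * Real.pi) ^ (-(3 : ℝ) / 2) : ℝ) : ℂ) * physFourierInv a x) *
        ((((2 * Real.pi) ^ (-(3 : ℝ) / 2) : ℝ) : ℂ) * physFourierInv b x) := by
    simpa only [map_mul, conj_ofReal, mul_mul_mul_comm] using
      (integrable_conj_physFourierInv_mul a b).const_mul _
  have hterm₁ (p : E3) :
      conj (((2 * relEnergy m p : ℝ) : ℂ)⁻¹) * (-I / 2) * (conj (φ p) * ψ p)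
        = -I / 2 * (((2 * relEnergy m p : ℝ) : ℂ)⁻¹ * conj (φ p) * ψ p) := by
    rw [map_inv₀, conj_ofReal]
    ring
  have hterm₂ (p : E3) :
      conj (-I / 2) * ((2 * relEnergy m p : ℝ) : ℂ)⁻¹ * (conj (φ p) * ψ p)
        = I / 2 * (((2 * relEnergy m p : ℝ) : ℂ)⁻¹ * conj (φ p) * ψ p) := by
    simp only [map_div₀, map_neg, conj_I, map_ofNat]
    ring
  simp only [kgPairing, (hasDerivAt_kgSolution_one hm _ t _).deriv]
  simp only [kgSolution_one_eq hm]
  rw [integral_sub (hint _ _) (hint _ _), integral_conj_mul_evolvedProfile hm t hw hhalf,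
    integral_conj_mul_evolvedProfile hm t hhalf hw]
  simp only [hterm₁, hterm₂, integral_const_mul]
  linear_combination (-∫ p, ((2 * relEnergy m p : ℝ) : ℂ)⁻¹ * conj (φ p) * ψ p) * I_mul_I

end KleinGordon

/-- The Klein–Gordon inner product of positive-frequency solutions assumes the standard
Schrödinger form when expressed in terms of the Newton–Wigner wave functions. -/
theorem newtonWigner_schroedinger_form
    (m : ℝ) (hm : 0 < m)
    (φt ψt : SchwartzMap (EuclideanSpace ℝ (Fin 3)) ℂ) :
    ∀ t : ℝ,
      (∫ x : EuclideanSpace ℝ (Fin 3),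
          starRingEnd ℂ (newtonWigner m φt t x) * newtonWigner m ψt t x)
        = (∫ p : EuclideanSpace ℝ (Fin 3),
            ((2 * relEnergy m p : ℝ) : ℂ)⁻¹ * starRingEnd ℂ (φt p) * ψt p) ∧
      (∫ p : EuclideanSpace ℝ (Fin 3),
          ((2 * relEnergy m p : ℝ) : ℂ)⁻¹ * starRingEnd ℂ (φt p) * ψt p)
        = kgPairing (kgSolution m 1 φt) (kgSolution m 1 ψt) t := fun t =>
  ⟨integral_conj_newtonWigner_mul hm.ne' φt ψt t, (kgPairing_kgSolution_one hm.ne' φt ψt t).symm⟩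

end
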